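/- Let 0 ≤ p ≤ m and 0 ≤ q < n, and let β be an entry of B. Then the evaluation of Sylv^{p,q}(A,B) at β equals (−1)^{q+(m−p)} · coeff_{p+q}( Sylv^{p,q}(A, B−β) ) · R(β,A), where B−β is the list B with the entry β removed and coeff_{p+q} denotes the coefficient of x^{p+q}. -/

import Mathlib

/-
Evaluating at `β = B j0` kills every term of `Sylv^{p,q}(A,B)` whose `B`-subset contains `j0`; the
surviving subsets are exactly the `q`-subsets of `B - β`. For such a pair `(S, T)` the factor
`R(β, T)` produced by evaluation cancels the extra factor `R(T, β)` in the denominator up to the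
sign `(-1)^q`, while the extra factor `R(A ∖ S, β)` of the numerator combines with `R(β, S)` into
`(-1)^(m-p) R(β, A)`. What remains is the scalar coefficient of the monic degree-`(p+q)` term
`R(x,S) R(x,T)` of `Sylv^{p,q}(A, B - β)`.
-/

open Polynomial Finset

noncomputable section

variable {F : Type*} [Field F]

/-- Coefficient of a polynomial at an integer index (0 for negative indices). -/
def coeffZ (f : F[X]) (z : ℤ) : F := if 0 ≤ z then f.coeff z.toNat else 0

/-- The `(m+n-2k) × (m+n-2k)` matrix `M_k(f,g)` whose determinant is the
`k`-th subresultant of `f` (of degree `m`) and `g` (of degree `n`). -/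
def sresM (m n k : ℕ) (f g : F[X]) :
    Matrix (Fin (m + n - 2*k)) (Fin (m + n - 2*k)) F[X] := fun i j =>
  if (j : ℕ) = m + n - 2*k - 1 then
    if (i : ℕ) < n - k then X ^ (n - k - 1 - (i : ℕ)) * f
    else X ^ (m - k - 1 - ((i : ℕ) - (n - k))) * g
  else
    if (i : ℕ) < n - k then C (coeffZ f ((m : ℤ) + (i : ℕ) - (j : ℕ)))
    else C (coeffZ g ((k : ℤ) + (i : ℕ) - (j : ℕ)))

/-- `M_k(f,g)` with the last column replaced by `(x^{n-k-1},…,x^0,0,…,0)ᵀ`. -/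
def sresMF (m n k : ℕ) (f g : F[X]) :
    Matrix (Fin (m + n - 2*k)) (Fin (m + n - 2*k)) F[X] := fun i j =>
  if (j : ℕ) = m + n - 2*k - 1 then
    if (i : ℕ) < n - k then X ^ (n - k - 1 - (i : ℕ)) else 0
  else sresM m n k f g i j

/-- `M_k(f,g)` with the last column replaced by `(0,…,0,x^{m-k-1},…,x^0)ᵀ`. -/
def sresMG (m n k : ℕ) (f g : F[X]) :
    Matrix (Fin (m + n - 2*k)) (Fin (m + n - 2*k)) F[X] := fun i j =>
  if (j : ℕ) = m + n - 2*k - 1 then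
    if (i : ℕ) < n - k then 0 else X ^ (m - k - 1 - ((i : ℕ) - (n - k)))
  else sresM m n k f g i j

/-- The `k`-th subresultant `Sres_k(f,g)` w.r.t. degrees `m`, `n`. -/
def Sres (m n k : ℕ) (f g : F[X]) : F[X] := (sresM m n k f g).det

/-- The polynomial `F_k(f,g)` w.r.t. degrees `m`, `n`. -/
def Fk (m n k : ℕ) (f g : F[X]) : F[X] := (sresMF m n k f g).det

/-- The polynomial `G_k(f,g)` w.r.t. degrees `m`, `n`. -/
def Gk (m n k : ℕ) (f g : F[X]) : F[X] := (sresMG m n k f g).det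

/-- `R(Y,Z) = ∏_{y ∈ Y, z ∈ Z} (y - z)`. -/
def Rp {ι κ : Type*} (a : ι → F) (b : κ → F) (S : Finset ι) (T : Finset κ) : F :=
  ∏ i ∈ S, ∏ j ∈ T, (a i - b j)

/-- `R(x,Y) = ∏_{y ∈ Y} (x - y)` as a polynomial. -/
def RX {ι : Type*} (a : ι → F) (S : Finset ι) : F[X] :=
  ∏ i ∈ S, (X - C (a i))

/-- Sylvester's double sum `Sylv^{p,q}(A,B)`. -/
def sylv {m n : ℕ} (A : Fin m → F) (B : Fin n → F) (p q : ℕ) : F[X] :=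
  ∑ S ∈ (univ : Finset (Fin m)).powersetCard p,
    ∑ T ∈ (univ : Finset (Fin n)).powersetCard q,
      C ((Rp A B S T * Rp A B Sᶜ Tᶜ) / (Rp A A S Sᶜ * Rp B B T Tᶜ)) *
        (RX A S * RX B T)

end

section Products

variable {F : Type*} [Field F] {ι ι' κ κ' : Type*}

lemma eval_RX (a : ι → F) (S : Finset ι) (x : F) :
    (RX a S).eval x = ∏ i ∈ S, (x - a i) := by
  simp [RX, eval_prod]

lemma coeff_C_mul_RX_mul_RX (c : F) (a : ι → F) (b : κ → F) (S : Finset ι) (T : Finset κ) :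
    (C c * (RX a S * RX b T)).coeff (#S + #T) = c := by
  have hS := monic_prod_X_sub_C a S
  have hT := monic_prod_X_sub_C b T
  rw [coeff_C_mul, RX, RX, ← natDegree_finsetProd_X_sub_C_eq_card S a,
    ← natDegree_finsetProd_X_sub_C_eq_card T b, ← hS.natDegree_mul hT,
    (hS.mul hT).coeff_natDegree, mul_one]

lemma Rp_map_left (a : ι' → F) (b : κ → F) (e : ι ↪ ι') (S : Finset ι) (T : Finset κ) :
    Rp a b (S.map e) T = Rp (a ∘ e) b S T :=
  prod_map S e _

lemma Rp_map_right (a : ι → F) (b : κ' → F) (e : κ ↪ κ') (S : Finset ι) (T : Finset κ) :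
    Rp a b S (T.map e) = Rp a (b ∘ e) S T :=
  prod_congr rfl fun _ _ => prod_map T e _

lemma Rp_insert_right [DecidableEq κ] (a : ι → F) (b : κ → F) (S : Finset ι) {T : Finset κ}
    {j : κ} (hj : j ∉ T) :
    Rp a b S (insert j T) = (∏ i ∈ S, (a i - b j)) * Rp a b S T := by
  simp only [Rp, prod_insert hj, prod_mul_distrib]

lemma prod_sub_swap (f g : ι → F) (S : Finset ι) :
    ∏ i ∈ S, (f i - g i) = (-1) ^ #S * ∏ i ∈ S, (g i - f i) := by
  simp only [← prod_neg, neg_sub]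

end Products

lemma Fin.compl_map_succAboveEmb {n : ℕ} (j0 : Fin (n + 1)) (T : Finset (Fin n)) :
    (T.map j0.succAboveEmb)ᶜ = insert j0 (Tᶜ.map j0.succAboveEmb) := by
  ext j
  rcases eq_or_ne j j0 with rfl | hj
  · simp [Fin.succAbove_ne]
  · obtain ⟨j', rfl⟩ := Fin.exists_succAbove_eq hj
    simp [Fin.succAbove_right_injective.eq_iff, Fin.succAbove_ne]

lemma Fin.sum_powersetCard_eq_sum_map_succAboveEmb {M : Type*} [AddCommMonoid M] {n : ℕ}
    (q : ℕ) (j0 : Fin (n + 1)) (f : Finset (Fin (n + 1)) → M) (hf : ∀ T, j0 ∈ T → f T = 0) :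
    ∑ T ∈ powersetCard q univ, f T = ∑ T ∈ powersetCard q univ, f (T.map j0.succAboveEmb) := by
  rw [← sum_subset (powersetCard_mono (subset_univ (univ.map j0.succAboveEmb))), powersetCard_map,
    sum_map]
  · rfl
  intro T hT hT'
  refine hf T (by_contra fun hj0 => hT' (mem_powersetCard.mpr ⟨fun j hj => ?_,
    (mem_powersetCard_univ.mp hT)⟩))
  obtain ⟨j', rfl⟩ := Fin.exists_succAbove_eq (ne_of_mem_of_not_mem hj hj0)
  exact mem_map_of_mem _ (mem_univ j')

section SylvesterDoubleSum

variable {F : Type*} [Field F] {ι κ : Type*} [Fintype ι] [DecidableEq ι] [Fintype κ] [DecidableEq κ]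

def sylvCoeff (A : ι → F) (B : κ → F) (S : Finset ι) (T : Finset κ) : F :=
  (Rp A B S T * Rp A B Sᶜ Tᶜ) / (Rp A A S Sᶜ * Rp B B T Tᶜ)

lemma sylv_eq_sum_sylvCoeff {m n : ℕ} (A : Fin m → F) (B : Fin n → F) (p q : ℕ) :
    sylv A B p q = ∑ S ∈ powersetCard p univ, ∑ T ∈ powersetCard q univ,
      C (sylvCoeff A B S T) * (RX A S * RX B T) :=
  rfl

lemma coeff_sylv_add {m n : ℕ} (A : Fin m → F) (B : Fin n → F) (p q : ℕ) :
    (sylv A B p q).coeff (p + q) =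
      ∑ S ∈ powersetCard p univ, ∑ T ∈ powersetCard q univ, sylvCoeff A B S T := by
  simp only [sylv_eq_sum_sylvCoeff, finsetSum_coeff]
  refine sum_congr rfl fun S hS => sum_congr rfl fun T hT => ?_
  rw [← (mem_powersetCard_univ.mp hS), ← (mem_powersetCard_univ.mp hT), coeff_C_mul_RX_mul_RX]

lemma sylvCoeff_map_succAboveEmb {n : ℕ} (A : ι → F) (B : Fin (n + 1) → F) (j0 : Fin (n + 1))
    (S : Finset ι) (T : Finset (Fin n)) :
    sylvCoeff A B S (T.map j0.succAboveEmb) =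
      sylvCoeff A (B ∘ j0.succAbove) S T * (∏ i ∈ Sᶜ, (A i - B j0)) /
        ∏ j ∈ T, (B (j0.succAbove j) - B j0) := by
  have hj0 : j0 ∉ Tᶜ.map j0.succAboveEmb := by simp [Fin.succAbove_ne]
  simp only [sylvCoeff, Fin.compl_map_succAboveEmb, Rp_insert_right _ _ _ hj0, Rp_map_left,
    Rp_map_right, prod_map, Fin.coe_succAboveEmb]
  ring

lemma sylvCoeff_map_succAboveEmb_mul_eval {n : ℕ} (A : ι → F) (B : Fin (n + 1) → F)
    {j0 : Fin (n + 1)} (hB : ∀ j, B (j0.succAbove j) ≠ B j0) (S : Finset ι) (T : Finset (Fin n)) :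
    sylvCoeff A B S (T.map j0.succAboveEmb) *
        ((RX A S).eval (B j0) * (RX B (T.map j0.succAboveEmb)).eval (B j0)) =
      (-1) ^ (#T + #Sᶜ) * sylvCoeff A (B ∘ j0.succAbove) S T * ∏ i, (B j0 - A i) := by
  have hT : ∏ j ∈ T, (B (j0.succAbove j) - B j0) ≠ 0 :=
    prod_ne_zero_iff.mpr fun j _ => sub_ne_zero.mpr (hB j)
  rw [sylvCoeff_map_succAboveEmb, eval_RX, eval_RX, prod_map, prod_sub_swap A (fun _ => B j0) Sᶜ,
    prod_sub_swap (fun _ => B j0) _ T, ← prod_mul_prod_compl S]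
  simp only [Fin.coe_succAboveEmb]
  field_simp
  ring

end SylvesterDoubleSum

theorem sylvester_double_sum_eval_root_g_general {F : Type*} [Field F] {m n : ℕ}
    (A : Fin m → F) (B : Fin (n + 1) → F)
    (hB : Function.Injective B)
    (p q : ℕ) (j0 : Fin (n + 1)) :
    (sylv A B p q).eval (B j0)
      = (-1 : F) ^ (q + (m - p))
          * ((sylv A (fun j : Fin n => B (j0.succAbove j)) p q).coeff (p + q))
          * ∏ i, (B j0 - A i) := by
  have hβ : ∀ j, B (j0.succAbove j) ≠ B j0 := fun j h => Fin.succAbove_ne j0 j (hB h)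
  rw [coeff_sylv_add, mul_sum, sum_mul, sylv_eq_sum_sylvCoeff, eval_finsetSum]
  refine sum_congr rfl fun S hS => ?_
  rw [eval_finsetSum, mul_sum, sum_mul,
    Fin.sum_powersetCard_eq_sum_map_succAboveEmb q j0 _ fun T hT => ?_]
  · refine sum_congr rfl fun T hT => ?_
    rw [eval_mul, eval_C, eval_mul, sylvCoeff_map_succAboveEmb_mul_eval A B hβ, card_compl,
      Fintype.card_fin, mem_powersetCard_univ.mp hS, mem_powersetCard_univ.mp hT]
    rfl
  · rw [eval_mul, eval_mul, eval_RX B, prod_eq_zero hT (sub_self _), mul_zero, mul_zero]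

/-- for `0 ≤ p ≤ m` and `0 ≤ q < |B|`, and `β` an entry of `B`,
`Sylv^{p,q}(A,B)(β) = (−1)^{q+(m−p)} · coeff_{p+q}(Sylv^{p,q}(A,B−β)) · R(β,A)`.
Here `B` has length `n+1` and `B − β` is `B` with the entry `β = B j0` removed. -/
theorem sylvester_double_sum_eval_root_g {F : Type*} [Field F] {m n : ℕ} (hm : 1 ≤ m)
    (A : Fin m → F) (B : Fin (n + 1) → F)
    (hA : Function.Injective A) (hB : Function.Injective B)
    (p q : ℕ) (hp : p ≤ m) (hq : q < n + 1) (j0 : Fin (n + 1)) :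
    (sylv A B p q).eval (B j0)
      = (-1 : F) ^ (q + (m - p))
          * ((sylv A (fun j : Fin n => B (j0.succAbove j)) p q).coeff (p + q))
          * ∏ i, (B j0 - A i) :=
  sylvester_double_sum_eval_root_g_general A B hB p q j0
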